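/- For the nondimensionalized van der Waals pressure p(v) = γ/(v−1) − 1/v² on v > 1: (i) if γ > 81/256 then p is strictly decreasing and strictly convex on (1, ∞); (ii) if γ < 8/27 then p' vanishes at exactly two points of (1, ∞), so p has exactly one local minimum and one local maximum there. -/

import Mathlib

/-!
On `(1, ∞)` one has `p'(v) = (spinodalGamma v - γ) / (v - 1)²` with
`spinodalGamma v = 2(v - 1)²/v³`, so the critical points of `p` are the solutions of
`spinodalGamma v = γ`. This function increases from `0` to `8/27` on `[1, 3]` and then decreases
towards `0`, so for `0 < γ < 8/27` the level `γ` is reached exactly twice, at `v₁ < 3 < v₂`, and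
`p'` is negative, positive, negative on the three intervals they cut out; for `γ > 8/27` it is never
reached and `p' < 0`. Likewise `p''(v) = 2(γ - inflectionGamma v) / (v - 1)³` with
`inflectionGamma v = 3(v - 1)³/v⁴ ≤ 81/256`, the bound being attained at `v = 4`.
-/

open Set

section Unimodal

variable {f : ℝ → ℝ} {a c x x₁ x₂ : ℝ}

theorem le_apply_iff_mem_Icc_of_unimodal (hmono : StrictMonoOn f (Icc a c))
    (hanti : StrictAntiOn f (Ici c)) (hx₁ : x₁ ∈ Icc a c) (hx₂ : x₂ ∈ Ici c)
    (h : f x₁ = f x₂) (hx : a ≤ x) : f x₁ ≤ f x ↔ x ∈ Icc x₁ x₂ := by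
  rcases le_total x c with hxc | hcx
  · rw [hmono.le_iff_le hx₁ ⟨hx, hxc⟩]
    exact ⟨fun h₁ => ⟨h₁, hxc.trans hx₂⟩, And.left⟩
  · rw [h, hanti.le_iff_ge hx₂ hcx]
    exact ⟨fun h₂ => ⟨hx₁.2.trans hcx, h₂⟩, And.right⟩

theorem apply_eq_iff_of_unimodal (hmono : StrictMonoOn f (Icc a c))
    (hanti : StrictAntiOn f (Ici c)) (hx₁ : x₁ ∈ Ico a c) (hx₂ : x₂ ∈ Ioi c)
    (h : f x₁ = f x₂) (hx : a ≤ x) : f x = f x₁ ↔ x = x₁ ∨ x = x₂ := by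
  have hx₁c : x₁ < c := hx₁.2
  have hcx₂ : c < x₂ := hx₂
  rcases le_total x c with hxc | hcx
  · rw [hmono.injOn.eq_iff ⟨hx, hxc⟩ (Ico_subset_Icc_self hx₁)]
    exact ⟨Or.inl, fun h' => h'.resolve_right (by rintro rfl; linarith)⟩
  · rw [h, hanti.injOn.eq_iff hcx (mem_Ici.2 hcx₂.le)]
    exact ⟨Or.inr, fun h' => h'.resolve_left (by rintro rfl; linarith)⟩

end Unimodal

noncomputable section

def vdwPressure (γ v : ℝ) : ℝ := γ / (v - 1) - 1 / v ^ 2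

def spinodalGamma (v : ℝ) : ℝ := 2 * (v - 1) ^ 2 / v ^ 3

def inflectionGamma (v : ℝ) : ℝ := 3 * (v - 1) ^ 3 / v ^ 4

end

section SpinodalGamma

variable {v : ℝ}

theorem hasDerivAt_spinodalGamma (h₀ : v ≠ 0) :
    HasDerivAt spinodalGamma (2 * (v - 1) * (3 - v) / v ^ 4) v := by
  refine (((((hasDerivAt_id' v).sub_const 1).pow 2).const_mul 2).div (hasDerivAt_pow 3 v)
    (pow_ne_zero 3 h₀)).congr_deriv ?_
  simp only [Pi.pow_apply]
  field_simp
  ring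

theorem continuousOn_spinodalGamma : ContinuousOn spinodalGamma (Ici 1) := fun v hv =>
  (hasDerivAt_spinodalGamma (by linarith [mem_Ici.1 hv])).continuousAt.continuousWithinAt

theorem spinodalGamma_strictMonoOn : StrictMonoOn spinodalGamma (Icc 1 3) := by
  refine strictMonoOn_of_deriv_pos (convex_Icc 1 3)
    (continuousOn_spinodalGamma.mono Icc_subset_Ici_self) fun v hv => ?_
  rw [interior_Icc] at hv
  obtain ⟨h1, h3⟩ := hv
  rw [(hasDerivAt_spinodalGamma (by linarith)).deriv]
  have : 0 < 2 * (v - 1) * (3 - v) := by nlinarith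
  positivity

theorem spinodalGamma_strictAntiOn : StrictAntiOn spinodalGamma (Ici 3) := by
  refine strictAntiOn_of_deriv_neg (convex_Ici 3)
    (continuousOn_spinodalGamma.mono (Ici_subset_Ici.2 (by norm_num))) fun v hv => ?_
  rw [interior_Ici] at hv
  have h3 : 3 < v := hv
  rw [(hasDerivAt_spinodalGamma (by linarith)).deriv]
  have : 2 * (v - 1) * (3 - v) < 0 := by nlinarith
  exact div_neg_of_neg_of_pos this (by positivity)

theorem spinodalGamma_le (hv : 3 / 4 ≤ v) : spinodalGamma v ≤ 8 / 27 := by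
  rw [spinodalGamma, div_le_iff₀ (by positivity : (0 : ℝ) < v ^ 3)]
  nlinarith [mul_nonneg (sq_nonneg (v - 3)) (by linarith : (0 : ℝ) ≤ 4 * v - 3)]

variable {γ : ℝ}

theorem exists_mem_Ioo_spinodalGamma_eq (hγ₀ : 0 < γ) (hγ : γ < 8 / 27) :
    ∃ v ∈ Ioo 1 3, spinodalGamma v = γ :=
  intermediate_value_Ioo (by norm_num) (continuousOn_spinodalGamma.mono Icc_subset_Ici_self)
    ⟨by simpa [spinodalGamma] using hγ₀, by norm_num [spinodalGamma]; exact hγ⟩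

theorem exists_mem_Ioi_spinodalGamma_eq (hγ₀ : 0 < γ) (hγ : γ < 8 / 27) :
    ∃ v ∈ Ioi 3, spinodalGamma v = γ := by
  have h3 : 3 ≤ 3 / γ := by rw [le_div_iff₀ hγ₀]; nlinarith
  have hlt : spinodalGamma (3 / γ) < γ := by
    rw [spinodalGamma, div_lt_iff₀ (by positivity)]
    field_simp
    nlinarith
  obtain ⟨v, hv, hγv⟩ := intermediate_value_Ioo' h3
    (continuousOn_spinodalGamma.mono (Icc_subset_Ici_iff h3 |>.2 (by norm_num)))
    ⟨hlt, by norm_num [spinodalGamma]; exact hγ⟩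
  exact ⟨v, hv.1, hγv⟩

end SpinodalGamma

theorem inflectionGamma_le (v : ℝ) : inflectionGamma v ≤ 81 / 256 := by
  rcases eq_or_ne v 0 with rfl | hv
  · norm_num [inflectionGamma]
  rw [inflectionGamma, div_le_iff₀ (by positivity)]
  nlinarith [mul_nonneg (sq_nonneg (v - 4)) (by nlinarith [sq_nonneg (27 * v - 20)] :
    (0 : ℝ) ≤ 27 * v ^ 2 - 40 * v + 16)]

section VdwPressure

variable {γ v : ℝ}

theorem hasDerivAt_vdwPressure (hv : 1 < v) :
    HasDerivAt (vdwPressure γ) (2 / v ^ 3 - γ / (v - 1) ^ 2) v := by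
  have h₀ : v ≠ 0 := by positivity
  have h₁ : v - 1 ≠ 0 := by linarith
  refine (((hasDerivAt_const v γ).div ((hasDerivAt_id' v).sub_const 1) h₁).sub
    ((hasDerivAt_const v 1).div (hasDerivAt_pow 2 v) (pow_ne_zero 2 h₀))).congr_deriv ?_
  field_simp
  ring

theorem differentiableOn_vdwPressure : DifferentiableOn ℝ (vdwPressure γ) (Ioi 1) := fun _ hv =>
  (hasDerivAt_vdwPressure hv).differentiableAt.differentiableWithinAt

theorem deriv_vdwPressure (hv : 1 < v) :
    deriv (vdwPressure γ) v = (spinodalGamma v - γ) / (v - 1) ^ 2 := by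
  have h₀ : v ≠ 0 := by positivity
  have h₁ : v - 1 ≠ 0 := by linarith
  rw [(hasDerivAt_vdwPressure hv).deriv, spinodalGamma]
  field_simp

theorem hasDerivAt_deriv_vdwPressure (hv : 1 < v) :
    HasDerivAt (deriv (vdwPressure γ)) (2 * (γ - inflectionGamma v) / (v - 1) ^ 3) v := by
  have h₀ : v ≠ 0 := by positivity
  have h₁ : v - 1 ≠ 0 := by linarith
  have hderiv : (fun w => 2 / w ^ 3 - γ / (w - 1) ^ 2) =ᶠ[nhds v] deriv (vdwPressure γ) := by
    filter_upwards [Ioi_mem_nhds hv] with w hw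
    exact (hasDerivAt_vdwPressure hw).deriv.symm
  refine ((((hasDerivAt_const v 2).div (hasDerivAt_pow 3 v) (pow_ne_zero 3 h₀)).sub
    ((hasDerivAt_const v γ).div (((hasDerivAt_id' v).sub_const 1).pow 2)
      (pow_ne_zero 2 h₁))).congr_of_eventuallyEq hderiv.symm).congr_deriv ?_
  simp only [Pi.pow_apply, inflectionGamma]
  field_simp
  ring

theorem vdwPressure_strictAntiOn (hγ : 8 / 27 < γ) : StrictAntiOn (vdwPressure γ) (Ioi 1) := by
  refine strictAntiOn_of_deriv_neg (convex_Ioi 1) differentiableOn_vdwPressure.continuousOn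
    fun v hv => ?_
  rw [interior_Ioi] at hv
  have hv : 1 < v := hv
  rw [deriv_vdwPressure hv]
  have : 0 < (v - 1) ^ 2 := by nlinarith
  exact div_neg_of_neg_of_pos (by linarith [spinodalGamma_le (v := v) (by linarith)]) this

theorem vdwPressure_strictConvexOn (hγ : 81 / 256 < γ) :
    StrictConvexOn ℝ (Ioi 1) (vdwPressure γ) := by
  refine strictConvexOn_of_deriv2_pos' (convex_Ioi 1) differentiableOn_vdwPressure.continuousOn
    fun v hv => ?_
  have hv : 1 < v := hv
  rw [Function.iterate_succ_apply, Function.iterate_one,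
    (hasDerivAt_deriv_vdwPressure hv).deriv]
  have : 0 < (v - 1) ^ 3 := pow_pos (by linarith) 3
  exact div_pos (by linarith [inflectionGamma_le v]) this

end VdwPressure

section Subcritical

variable {γ v v₁ v₂ : ℝ}

theorem zero_le_deriv_vdwPressure_iff (hv₁ : v₁ ∈ Ioo 1 3) (hv₂ : 3 < v₂)
    (h₁ : spinodalGamma v₁ = γ) (h₂ : spinodalGamma v₂ = γ) (hv : 1 < v) :
    0 ≤ deriv (vdwPressure γ) v ↔ v ∈ Icc v₁ v₂ := by
  have : 0 < (v - 1) ^ 2 := by nlinarith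
  rw [deriv_vdwPressure hv, le_div_iff₀ this, zero_mul, sub_nonneg, ← h₁]
  exact le_apply_iff_mem_Icc_of_unimodal spinodalGamma_strictMonoOn spinodalGamma_strictAntiOn
    (Ioo_subset_Icc_self hv₁) hv₂.le (h₁.trans h₂.symm) hv.le

theorem deriv_vdwPressure_eq_zero_iff (hv₁ : v₁ ∈ Ioo 1 3) (hv₂ : 3 < v₂)
    (h₁ : spinodalGamma v₁ = γ) (h₂ : spinodalGamma v₂ = γ) (hv : 1 < v) :
    deriv (vdwPressure γ) v = 0 ↔ v = v₁ ∨ v = v₂ := by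
  have : (v - 1) ^ 2 ≠ 0 := by nlinarith
  rw [deriv_vdwPressure hv, div_eq_zero_iff, or_iff_left this, sub_eq_zero, ← h₁]
  exact apply_eq_iff_of_unimodal spinodalGamma_strictMonoOn spinodalGamma_strictAntiOn
    (Ioo_subset_Ico_self hv₁) hv₂ (h₁.trans h₂.symm) hv.le

theorem setOf_deriv_vdwPressure_eq_zero (hv₁ : v₁ ∈ Ioo 1 3) (hv₂ : 3 < v₂)
    (h₁ : spinodalGamma v₁ = γ) (h₂ : spinodalGamma v₂ = γ) :
    {v | v ∈ Ioi 1 ∧ deriv (vdwPressure γ) v = 0} = {v₁, v₂} := by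
  ext v
  refine ⟨fun ⟨hv, hd⟩ => (deriv_vdwPressure_eq_zero_iff hv₁ hv₂ h₁ h₂ hv).1 hd,
    fun hv => ?_⟩
  have h1v : 1 < v := by rcases hv with rfl | rfl <;> linarith [hv₁.1]
  exact ⟨h1v, (deriv_vdwPressure_eq_zero_iff hv₁ hv₂ h₁ h₂ h1v).2 hv⟩

theorem isLocalMin_vdwPressure (hv₁ : v₁ ∈ Ioo 1 3) (hv₂ : 3 < v₂)
    (h₁ : spinodalGamma v₁ = γ) (h₂ : spinodalGamma v₂ = γ) :
    IsLocalMin (vdwPressure γ) v₁ := by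
  have hv₁₂ : v₁ < v₂ := hv₁.2.trans hv₂
  have one_lt {v} (h : v₁ < v) : 1 < v := hv₁.1.trans h
  refine isLocalMin_of_deriv_Ioo hv₁.1 hv₁₂ (hasDerivAt_vdwPressure hv₁.1).continuousAt
    (differentiableOn_vdwPressure.mono Ioo_subset_Ioi_self)
    (differentiableOn_vdwPressure.mono fun v hv => one_lt hv.1) (fun v hv => ?_) fun v hv => ?_
  · refine (not_le.1 fun hd => ?_).le
    exact ((zero_le_deriv_vdwPressure_iff hv₁ hv₂ h₁ h₂ hv.1).1 hd).1.not_gt hv.2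
  · exact (zero_le_deriv_vdwPressure_iff hv₁ hv₂ h₁ h₂ (one_lt hv.1)).2
      ⟨hv.1.le, hv.2.le⟩

theorem isLocalMax_vdwPressure (hv₁ : v₁ ∈ Ioo 1 3) (hv₂ : 3 < v₂)
    (h₁ : spinodalGamma v₁ = γ) (h₂ : spinodalGamma v₂ = γ) :
    IsLocalMax (vdwPressure γ) v₂ := by
  have hv₁₂ : v₁ < v₂ := hv₁.2.trans hv₂
  have one_lt {v} (h : v₁ < v) : 1 < v := hv₁.1.trans h
  refine isLocalMax_of_deriv_Ioo hv₁₂ (lt_add_one v₂)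
    (hasDerivAt_vdwPressure (one_lt hv₁₂)).continuousAt
    (differentiableOn_vdwPressure.mono fun v hv => one_lt hv.1)
    (differentiableOn_vdwPressure.mono fun v hv => one_lt (hv₁₂.trans hv.1)) (fun v hv => ?_)
    fun v hv => ?_
  · exact (zero_le_deriv_vdwPressure_iff hv₁ hv₂ h₁ h₂ (one_lt hv.1)).2
      ⟨hv.1.le, hv.2.le⟩
  · refine (not_le.1 fun hd => ?_).le
    have hv₂v := ((zero_le_deriv_vdwPressure_iff hv₁ hv₂ h₁ h₂ (one_lt (hv₁₂.trans hv.1))).1 hd).2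
    exact hv₂v.not_gt hv.1

end Subcritical

/-- for the nondimensionalized van der Waals pressure
`p(v) = γ/(v-1) - 1/v²` on `(1, ∞)`: (i) if `γ > 81/256` then `p` is strictly decreasing
and strictly convex on `(1, ∞)`; (ii) if `0 < γ < 8/27` then `p'` vanishes at exactly two
points of `(1, ∞)`, giving exactly one local minimum and one local maximum of `p` there. -/
theorem vanDerWaals_classification (γ : ℝ) :
    (γ > 81 / 256 →
      StrictAntiOn (fun v : ℝ => γ / (v - 1) - 1 / v ^ 2) (Set.Ioi 1) ∧
      StrictConvexOn ℝ (Set.Ioi (1 : ℝ)) (fun v : ℝ => γ / (v - 1) - 1 / v ^ 2)) ∧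
    (0 < γ → γ < 8 / 27 →
      ∃ v₁ v₂ : ℝ, 1 < v₁ ∧ v₁ < v₂ ∧
        {v : ℝ | v ∈ Set.Ioi (1 : ℝ) ∧
            deriv (fun v : ℝ => γ / (v - 1) - 1 / v ^ 2) v = 0} = {v₁, v₂} ∧
        IsLocalMin (fun v : ℝ => γ / (v - 1) - 1 / v ^ 2) v₁ ∧
        IsLocalMax (fun v : ℝ => γ / (v - 1) - 1 / v ^ 2) v₂) := by
  rw [show (fun v : ℝ => γ / (v - 1) - 1 / v ^ 2) = vdwPressure γ from rfl]
  refine ⟨fun hγ => ⟨vdwPressure_strictAntiOn (by linarith), vdwPressure_strictConvexOn hγ⟩,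
    fun hγ₀ hγ => ?_⟩
  obtain ⟨v₁, hv₁, h₁⟩ := exists_mem_Ioo_spinodalGamma_eq hγ₀ hγ
  obtain ⟨v₂, hv₂, h₂⟩ := exists_mem_Ioi_spinodalGamma_eq hγ₀ hγ
  exact ⟨v₁, v₂, hv₁.1, hv₁.2.trans hv₂, setOf_deriv_vdwPressure_eq_zero hv₁ hv₂ h₁ h₂,
    isLocalMin_vdwPressure hv₁ hv₂ h₁ h₂, isLocalMax_vdwPressure hv₁ hv₂ h₁ h₂⟩
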